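/- arXiv:2509.17597 — 2 statements merged into one kernel-verified Lean document; each statement's English description precedes it below -/
import Mathlib

section
/- The map C ↦ D_α(C) is an inclusion-reversing bijection between the set of ideals of R = F[X_1,…,X_s]/⟨X_i^{r_i}−1⟩ and the set of subsets of ∏ Z_{r_i} that are unions of q-orbits, with inverse Q ↦ {f ∈ R : f(α^m) = 0 for all m ∈ Q}. -/
open MvPolynomial

/-- The ideal `⟨X_1^{r_1} - 1, …, X_s^{r_s} - 1⟩` of `F[X_1,…,X_s]`. -/
noncomputable def polyRelIdeal (F : Type*) [Field F] {s : ℕ} (r : Fin s → ℕ) :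
    Ideal (MvPolynomial (Fin s) F) :=
  Ideal.span (Set.range fun i => X i ^ r i - 1)

/-- The defining set of an ideal `A` of `F[X_1,…,X_s]/⟨X_i^{r_i} - 1⟩` with respect to the
tuple `α` of roots of unity in the extension `L`: those `m ∈ ∏ ZMod (r i)` such that every
(representative of an) element of `A` vanishes at `(α_1^{m_1},…,α_s^{m_s})`. -/
noncomputable def defSet {F : Type*} [Field F] (L : Type*) [Field L] [Algebra F L]
    {s : ℕ} (r : Fin s → ℕ) (α : Fin s → L)
    (A : Ideal (MvPolynomial (Fin s) F ⧸ polyRelIdeal F r)) :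
    Set ((i : Fin s) → ZMod (r i)) :=
  {m | ∀ f : MvPolynomial (Fin s) F,
    Ideal.Quotient.mk (polyRelIdeal F r) f ∈ A →
    aeval (fun i => α i ^ (m i).val) f = 0}

/-!
Write `R = F[X]/⟨X_i^{r_i} - 1⟩` and `ev_m : R → L` for evaluation at `α^m`. A polynomial
reduced to degrees `< r i` that vanishes on the grid of all `α^m` is zero, so the `ev_m` jointly
embed `R` into a finite product of fields: `R` is a finite reduced ring. Its ideals are then
radical, hence (`R` being Artinian) intersections of maximal ideals, and by prime avoidance every
maximal ideal is some `ker ev_m`; this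
Nullstellensatz `C = ⋂_{m ∈ D(C)} ker ev_m` gives order reversal and injectivity. Since
`ev_{qm}` is `ev_m` followed by the `q`-power Frobenius, `D(C)` is `q`-closed. Conversely, if
`⋂_{m' ∈ Q} ker ev_{m'} ⊆ ker ev_m`, prime avoidance gives `m' ∈ Q` with
`ker ev_{m'} = ker ev_m`; the two evaluations then differ by an automorphism of the finite field
`R ⧸ ker ev_m`, a power of Frobenius, so `m = q^n m'` lies in the `q`-closed set `Q`.
-/

theorem pow_val_eq_pow_iff {M : Type*} [Monoid M] {x : M} {n : ℕ} [NeZero n]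
    (hx : orderOf x = n) (a : ZMod n) (k : ℕ) : x ^ a.val = x ^ k ↔ a = k := by
  rw [(orderOf_pos_iff.mp (hx ▸ Nat.pos_of_neZero n)).pow_eq_pow_iff_modEq, hx,
    ← ZMod.natCast_eq_natCast_iff, ZMod.natCast_zmod_val]

namespace Ideal

variable {R : Type*} [CommRing R]

theorem IsPrime.exists_le_of_biInf_le {ι : Type*} [Finite ι] {f : ι → Ideal R} {P : Ideal R}
    (hP : P.IsPrime) {s : Set ι} (h : ⨅ i ∈ s, f i ≤ P) : ∃ i ∈ s, f i ≤ P := by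
  classical
  have := Fintype.ofFinite ι
  obtain ⟨i, hi, hle⟩ := (hP.inf_le' (s := s.toFinset) (f := f)).mp
    (by simpa [Finset.inf_eq_iInf] using h)
  exact ⟨i, Set.mem_toFinset.mp hi, hle⟩

theorem isRadical_of_isArtinianRing_of_isReduced [IsArtinianRing R] [IsReduced R] (C : Ideal R) :
    C.IsRadical := by
  have := IsArtinianRing.isSemisimpleRing_of_isReduced R
  simpa [annihilator_quotient] using IsSemisimpleModule.annihilator_isRadical (M := R ⧸ C) R

theorem biInf_ker_eq_of_iInf_ker_eq_bot {ι L G : Type*} [Finite ι] [IsArtinianRing R]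
    [CommRing L] [IsDomain L] [FunLike G R L] [RingHomClass G R L] (φ : ι → G)
    (hφ : ⨅ i, RingHom.ker (φ i) = ⊥) (C : Ideal R) :
    ⨅ (i) (_ : C ≤ RingHom.ker (φ i)), RingHom.ker (φ i) = C := by
  have : IsReduced R := by
    refine ⟨fun x ⟨n, hx⟩ => ?_⟩
    rw [← mem_bot, ← hφ, Submodule.mem_iInf]
    exact fun i => RingHom.mem_ker.mpr <| eq_zero_of_pow_eq_zero (n := n) <| by
      rw [← map_pow, hx, map_zero]
  refine le_antisymm ?_ (le_iInf₂ fun i hi => hi)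
  calc _ ≤ C.radical := ?_
    _ = C := (isRadical_of_isArtinianRing_of_isReduced C).radical
  rw [radical_eq_sInf]
  refine le_sInf fun P ⟨hCP, hP⟩ => ?_
  obtain ⟨i, -, hiP⟩ := hP.exists_le_of_biInf_le (s := Set.univ) (f := fun i => RingHom.ker (φ i))
    (by simp [hφ])
  have := RingHom.ker_isPrime (φ i)
  have hiP := (IsArtinianRing.isMaximal_of_isPrime (RingHom.ker (φ i))).eq_of_le hP.ne_top hiP
  exact iInf₂_le_of_le i (hiP ▸ hCP) hiP.le

end Ideal

theorem AlgHom.exists_apply_eq_pow_card_pow {F K L : Type*} [Field F] [Fintype F] [Field K]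
    [_root_.Finite K] [Algebra F K] [Field L] [Algebra F L] (ψ ψ' : K →ₐ[F] L) :
    ∃ n : ℕ, ∀ x, ψ x = ψ' x ^ Fintype.card F ^ n := by
  let _ : Algebra K L := ψ'.toAlgebra
  have : IsScalarTower F K L := .of_algebraMap_eq fun a => (ψ'.commutes a).symm
  -- `K / F` is normal, so `ψ` maps `K` onto `ψ' K`, i.e. `ψ = ψ' ∘ τ` with `τ ∈ Gal(K/F)`.
  obtain ⟨n, hn⟩ := (FiniteField.bijective_frobeniusAlgHom_pow F K).2 (ψ.restrictNormal K)
  refine ⟨n, fun x => ?_⟩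
  have := ψ.restrictNormal_commutes K x
  rw [← hn] at this
  simpa [AlgHom.coe_pow, FiniteField.coe_frobeniusAlgHom, pow_iterate,
    RingHom.algebraMap_toAlgebra] using this.symm

theorem AlgHom.exists_apply_eq_pow_card_pow_of_ker_le {F R L : Type*} [Field F] [Fintype F]
    [CommRing R] [_root_.Finite R] [Algebra F R] [Field L] [Algebra F L] (φ φ' : R →ₐ[F] L)
    (h : RingHom.ker φ' ≤ RingHom.ker φ) : ∃ n : ℕ, ∀ x, φ x = φ' x ^ Fintype.card F ^ n := by
  set P := RingHom.ker φ'
  have : IsArtinianRing R := isArtinian_of_finite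
  have := RingHom.ker_isPrime φ'
  have hP := IsArtinianRing.isMaximal_of_isPrime P
  have hPφ : P = RingHom.ker φ := hP.eq_of_le (RingHom.ker_ne_top φ) h
  let _ : Field (R ⧸ P) := Ideal.Quotient.field P
  have : _root_.Finite (R ⧸ P) := _root_.Finite.of_surjective _ Ideal.Quotient.mk_surjective
  obtain ⟨n, hn⟩ := exists_apply_eq_pow_card_pow (K := R ⧸ P)
    (Ideal.Quotient.liftₐ P φ fun x hx => RingHom.mem_ker.mp (hPφ ▸ hx))
    (Ideal.Quotient.liftₐ P φ' fun x hx => hx)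
  exact ⟨n, fun x => hn (Ideal.Quotient.mk P x)⟩

namespace polyRelIdeal

section Reduction

variable {F : Type*} [Field F] {s : ℕ} {r : Fin s → ℕ}

noncomputable def reduceExp (r : Fin s → ℕ) (d : Fin s →₀ ℕ) : Fin s →₀ ℕ :=
  Finsupp.equivFunOnFinite.symm fun i => d i % r i

noncomputable def reduce (r : Fin s → ℕ) (f : MvPolynomial (Fin s) F) : MvPolynomial (Fin s) F :=
  ∑ d ∈ f.support, monomial (reduceExp r d) (coeff d f)

theorem mk_X_pow_eq_one (i : Fin s) : Ideal.Quotient.mk (polyRelIdeal F r) (X i) ^ r i = 1 := by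
  rw [← map_pow, ← sub_eq_zero, ← map_one (Ideal.Quotient.mk _), ← map_sub,
    Ideal.Quotient.eq_zero_iff_mem]
  exact Ideal.subset_span ⟨i, rfl⟩

theorem mk_monomial_reduceExp (d : Fin s →₀ ℕ) (c : F) :
    Ideal.Quotient.mk (polyRelIdeal F r) (monomial (reduceExp r d) c) =
      Ideal.Quotient.mk (polyRelIdeal F r) (monomial d c) := by
  simp only [monomial_eq, map_mul, Finsupp.prod_fintype _ _ fun _ => pow_zero _, map_prod, map_pow]
  congr 1
  exact Finset.prod_congr rfl fun i _ => (pow_eq_pow_mod (d i) (mk_X_pow_eq_one i)).symm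

theorem mk_reduce (f : MvPolynomial (Fin s) F) :
    Ideal.Quotient.mk (polyRelIdeal F r) (reduce r f) = Ideal.Quotient.mk (polyRelIdeal F r) f := by
  conv_rhs => rw [← support_sum_monomial_coeff f]
  simp only [reduce, map_sum, mk_monomial_reduceExp]

variable [∀ i, NeZero (r i)]

theorem degreeOf_reduce_lt (f : MvPolynomial (Fin s) F) (i : Fin s) :
    (reduce r f).degreeOf i < r i := by
  classical
  rw [degreeOf_lt_iff (Nat.pos_of_neZero _)]
  intro e he
  obtain ⟨d, -, hd⟩ := Finset.mem_biUnion.mp (support_sum he)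
  rw [Finset.mem_singleton.mp (support_monomial_subset hd)]
  exact Nat.mod_lt _ (Nat.pos_of_neZero _)

instance : Module.Finite F (MvPolynomial (Fin s) F ⧸ polyRelIdeal F r) := by
  refine ⟨Submodule.fg_def.mpr ⟨Set.range fun e : (∀ i, Fin (r i)) =>
    Ideal.Quotient.mkₐ F _ (monomial (Finsupp.equivFunOnFinite.symm fun i => (e i : ℕ)) 1),
    Set.finite_range _, eq_top_iff.mpr fun g _ => ?_⟩⟩
  obtain ⟨f, rfl⟩ := Ideal.Quotient.mkₐ_surjective F _ g
  rw [Ideal.Quotient.mkₐ_eq_mk, ← mk_reduce, reduce, map_sum]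
  refine Submodule.sum_mem _ fun d _ => ?_
  rw [← Ideal.Quotient.mkₐ_eq_mk F, ← mul_one (coeff d f), ← smul_eq_mul, ← smul_monomial,
    map_smul]
  exact Submodule.smul_mem _ _ (Submodule.subset_span
    ⟨fun i => ⟨d i % r i, Nat.mod_lt _ (Nat.pos_of_neZero _)⟩, rfl⟩)

instance [Finite F] : Finite (MvPolynomial (Fin s) F ⧸ polyRelIdeal F r) :=
  Module.finite_of_finite F

instance [Finite F] : IsArtinianRing (MvPolynomial (Fin s) F ⧸ polyRelIdeal F r) :=
  isArtinian_of_finite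

end Reduction

section Evaluation

variable {F L : Type*} [Field F] [Field L] [Algebra F L] {s : ℕ} {r : Fin s → ℕ} {α : Fin s → L}

noncomputable def evalAt (hα : ∀ i, orderOf (α i) = r i) (m : ∀ i, ZMod (r i)) :
    (MvPolynomial (Fin s) F ⧸ polyRelIdeal F r) →ₐ[F] L :=
  Ideal.Quotient.liftₐ _ (aeval fun i => α i ^ (m i).val) fun f hf => by
    refine (Ideal.span_le (I := RingHom.ker (aeval fun i => α i ^ (m i).val))).mpr ?_ hf
    rintro _ ⟨i, rfl⟩
    have h1 : α i ^ r i = 1 := hα i ▸ pow_orderOf_eq_one (α i)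
    rw [SetLike.mem_coe, RingHom.mem_ker, map_sub, map_pow, aeval_X, map_one, ← pow_mul,
      mul_comm, pow_mul, h1, one_pow, sub_self]

variable (hα : ∀ i, orderOf (α i) = r i)

@[simp]
theorem evalAt_mk (m : ∀ i, ZMod (r i)) (f : MvPolynomial (Fin s) F) :
    evalAt hα m (Ideal.Quotient.mk _ f) = aeval (fun i => α i ^ (m i).val) f :=
  rfl

theorem mem_defSet_iff {m : ∀ i, ZMod (r i)}
    {C : Ideal (MvPolynomial (Fin s) F ⧸ polyRelIdeal F r)} :
    m ∈ defSet L r α C ↔ C ≤ RingHom.ker (evalAt hα m) := by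
  refine ⟨fun h g hg => ?_, fun h f hf => h hf⟩
  obtain ⟨f, rfl⟩ := Ideal.Quotient.mk_surjective g
  exact h f hg

variable [∀ i, NeZero (r i)]

theorem iInf_ker_evalAt_eq_bot : ⨅ m, RingHom.ker (evalAt (F := F) hα m) = ⊥ := by
  classical
  refine eq_bot_iff.mpr fun g hg => ?_
  obtain ⟨f, rfl⟩ := Ideal.Quotient.mk_surjective g
  rw [Ideal.mem_bot, ← mk_reduce]
  suffices MvPolynomial.map (algebraMap F L) (reduce r f) = 0 by
    rw [map_injective _ (algebraMap F L).injective (this.trans (map_zero _).symm), map_zero]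
  have hcard i : ((Finset.range (r i)).image (α i ^ ·)).card = r i := by
    rw [Finset.card_image_of_injOn, Finset.card_range]
    intro a ha b hb hab
    exact pow_injOn_Iio_orderOf (by simpa [hα i] using ha) (by simpa [hα i] using hb) hab
  refine eq_zero_of_eval_zero_at_prod_finset _ (fun i => (Finset.range (r i)).image (α i ^ ·))
    (fun i => ?_) fun x hx => ?_
  · rw [hcard, degreeOf_lt_iff (Nat.pos_of_neZero _)]
    exact fun e he => (degreeOf_lt_iff (Nat.pos_of_neZero _)).mp (degreeOf_reduce_lt f i) e
      (support_map_subset _ _ he)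
  · choose k hk hxk using fun i => Finset.mem_image.mp (hx i)
    have hx : x = fun i => α i ^ ((k i : ZMod (r i))).val := by
      ext i
      rw [← hxk i, ZMod.val_cast_of_lt (Finset.mem_range.mp (hk i))]
    rw [eval_map, ← aeval_def, hx, ← evalAt_mk hα, mk_reduce]
    exact Submodule.mem_iInf _ |>.mp hg _

theorem le_iff_defSet_subset [Finite F] (hα : ∀ i, orderOf (α i) = r i)
    {C D : Ideal (MvPolynomial (Fin s) F ⧸ polyRelIdeal F r)} :
    C ≤ D ↔ defSet L r α D ⊆ defSet L r α C := by
  refine ⟨fun h m hm => (mem_defSet_iff hα).2 (h.trans ((mem_defSet_iff hα).1 hm)), fun h => ?_⟩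
  rw [← Ideal.biInf_ker_eq_of_iInf_ker_eq_bot _ (iInf_ker_evalAt_eq_bot (F := F) hα) D]
  exact le_iInf₂ fun m hm => (mem_defSet_iff hα).1 (h ((mem_defSet_iff hα).2 hm))

end Evaluation

section Frobenius

variable {F L : Type*} [Field F] [Fintype F] [Field L] [Algebra F L] {s : ℕ} {r : Fin s → ℕ}
  [∀ i, NeZero (r i)] {α : Fin s → L} (hα : ∀ i, orderOf (α i) = r i)

theorem evalAt_mul_card (m : ∀ i, ZMod (r i)) (g : MvPolynomial (Fin s) F ⧸ polyRelIdeal F r) :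
    evalAt hα (fun i => m i * Fintype.card F) g = evalAt hα m g ^ Fintype.card F := by
  suffices evalAt hα (fun i => m i * Fintype.card F) =
      (FiniteField.frobeniusAlgHom F L).comp (evalAt hα m) from congr($this g)
  refine Ideal.Quotient.algHom_ext F (algHom_ext fun i => ?_)
  simp only [AlgHom.comp_apply, Ideal.Quotient.mkₐ_eq_mk, evalAt_mk, aeval_X,
    FiniteField.frobeniusAlgHom_apply, ← pow_mul, pow_val_eq_pow_iff (hα i)]
  push_cast [ZMod.natCast_val, ZMod.cast_id]
  rfl

theorem mul_card_mem_defSet (hα : ∀ i, orderOf (α i) = r i) {C : Ideal (MvPolynomial (Fin s) F ⧸ polyRelIdeal F r)}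
    {m : ∀ i, ZMod (r i)} (hm : m ∈ defSet L r α C) :
    (fun i => m i * (Fintype.card F : ZMod (r i))) ∈ defSet L r α C := by
  rw [mem_defSet_iff hα] at hm ⊢
  intro g hg
  rw [RingHom.mem_ker, evalAt_mul_card, hm hg, zero_pow Fintype.card_ne_zero]

theorem exists_eq_mul_pow_of_ker_evalAt_le {m m' : ∀ i, ZMod (r i)}
    (h : RingHom.ker (evalAt (F := F) hα m') ≤ RingHom.ker (evalAt hα m)) :
    ∃ n : ℕ, ∀ i, m i = m' i * (Fintype.card F : ZMod (r i)) ^ n := by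
  obtain ⟨n, hn⟩ := AlgHom.exists_apply_eq_pow_card_pow_of_ker_le _ _ h
  refine ⟨n, fun i => ?_⟩
  have := hn (Ideal.Quotient.mk _ (X i))
  rw [evalAt_mk, evalAt_mk, aeval_X, aeval_X, ← pow_mul, pow_val_eq_pow_iff (hα i)] at this
  rw [this]
  push_cast [ZMod.natCast_val, ZMod.cast_id]
  rfl

theorem defSet_biInf_ker_evalAt {Q : Set (∀ i, ZMod (r i))}
    (hQ : ∀ a ∈ Q, (fun i => a i * (Fintype.card F : ZMod (r i))) ∈ Q) :
    defSet L r α (⨅ m ∈ Q, RingHom.ker (evalAt (F := F) hα m)) = Q := by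
  have hQpow (n : ℕ) : ∀ a ∈ Q, (fun i => a i * (Fintype.card F : ZMod (r i)) ^ n) ∈ Q := by
    induction n with
    | zero => simp
    | succ n ih => simpa [pow_succ, ← mul_assoc] using fun a ha => hQ _ (ih a ha)
  refine Set.Subset.antisymm (fun m hm => ?_) fun m hm => (mem_defSet_iff hα).2 (iInf₂_le m hm)
  obtain ⟨m', hm', hle⟩ := (RingHom.ker_isPrime (evalAt hα m)).exists_le_of_biInf_le
    ((mem_defSet_iff hα).1 hm)
  obtain ⟨n, hn⟩ := exists_eq_mul_pow_of_ker_evalAt_le hα hle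
  exact funext hn ▸ hQpow n m' hm'

end Frobenius

end polyRelIdeal

theorem stmt11_general {F L : Type*} [Field F] [Fintype F] [Field L] [Algebra F L]
    {s : ℕ} (r : Fin s → ℕ) (hr : ∀ i, 0 < r i)
    (α : Fin s → L) (hα : ∀ i, orderOf (α i) = r i) :
    -- inclusion-reversing
    (∀ C D : Ideal (MvPolynomial (Fin s) F ⧸ polyRelIdeal F r),
      C ≤ D ↔ defSet L r α D ⊆ defSet L r α C) ∧
    -- the image consists of unions of q-orbits
    (∀ C : Ideal (MvPolynomial (Fin s) F ⧸ polyRelIdeal F r),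
      ∀ a ∈ defSet L r α C,
        (fun i => a i * (Fintype.card F : ZMod (r i))) ∈ defSet L r α C) ∧
    -- injectivity
    (∀ C D : Ideal (MvPolynomial (Fin s) F ⧸ polyRelIdeal F r),
      defSet L r α C = defSet L r α D → C = D) ∧
    -- surjectivity onto q-orbit-closed sets, realized by the stated inverse map
    (∀ Q : Set ((i : Fin s) → ZMod (r i)),
      (∀ a ∈ Q, (fun i => a i * (Fintype.card F : ZMod (r i))) ∈ Q) →
      ∃ C : Ideal (MvPolynomial (Fin s) F ⧸ polyRelIdeal F r),
        (∀ g, g ∈ C ↔ ∀ f : MvPolynomial (Fin s) F,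
            Ideal.Quotient.mk (polyRelIdeal F r) f = g →
            ∀ m ∈ Q, aeval (fun i => α i ^ (m i).val) f = 0) ∧
        defSet L r α C = Q) := by
  have (i : Fin s) : NeZero (r i) := ⟨(hr i).ne'⟩
  have hle (C D : Ideal (MvPolynomial (Fin s) F ⧸ polyRelIdeal F r)) :=
    polyRelIdeal.le_iff_defSet_subset hα (C := C) (D := D)
  refine ⟨hle, fun C a => polyRelIdeal.mul_card_mem_defSet hα,
    fun C D h => le_antisymm ((hle C D).2 h.ge) ((hle D C).2 h.le),
    fun Q hQ => ⟨⨅ m ∈ Q, RingHom.ker (polyRelIdeal.evalAt hα m), fun g => ?_,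
      polyRelIdeal.defSet_biInf_ker_evalAt hα hQ⟩⟩
  simp only [Submodule.mem_iInf, RingHom.mem_ker]
  refine ⟨fun h f hf m hm => ?_, fun h m hm => ?_⟩
  · rw [← polyRelIdeal.evalAt_mk hα, hf]
    exact h m hm
  · obtain ⟨f, rfl⟩ := Ideal.Quotient.mk_surjective g
    exact h f rfl m hm

/-- The map `C ↦ D_α(C)` is an inclusion-reversing bijection from the ideals of
`R = F[X]/⟨X_i^{r_i}-1⟩` onto the subsets of `∏ ZMod (r i)` that are unions of
`q`-orbits, with inverse `Q ↦ {f ∈ R : f(α^m) = 0 ∀ m ∈ Q}`. -/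
theorem stmt11 {F L : Type*} [Field F] [Fintype F] [Field L] [Algebra F L]
    {s : ℕ} (r : Fin s → ℕ) (hr : ∀ i, 0 < r i)
    (hcop : Nat.Coprime (Fintype.card F) (∏ i, r i))
    (α : Fin s → L) (hα : ∀ i, orderOf (α i) = r i) :
    -- inclusion-reversing
    (∀ C D : Ideal (MvPolynomial (Fin s) F ⧸ polyRelIdeal F r),
      C ≤ D ↔ defSet L r α D ⊆ defSet L r α C) ∧
    -- the image consists of unions of q-orbits
    (∀ C : Ideal (MvPolynomial (Fin s) F ⧸ polyRelIdeal F r),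
      ∀ a ∈ defSet L r α C,
        (fun i => a i * (Fintype.card F : ZMod (r i))) ∈ defSet L r α C) ∧
    -- injectivity
    (∀ C D : Ideal (MvPolynomial (Fin s) F ⧸ polyRelIdeal F r),
      defSet L r α C = defSet L r α D → C = D) ∧
    -- surjectivity onto q-orbit-closed sets, realized by the stated inverse map
    (∀ Q : Set ((i : Fin s) → ZMod (r i)),
      (∀ a ∈ Q, (fun i => a i * (Fintype.card F : ZMod (r i))) ∈ Q) →
      ∃ C : Ideal (MvPolynomial (Fin s) F ⧸ polyRelIdeal F r),
        (∀ g, g ∈ C ↔ ∀ f : MvPolynomial (Fin s) F,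
            Ideal.Quotient.mk (polyRelIdeal F r) f = g →
            ∀ m ∈ Q, aeval (fun i => α i ^ (m i).val) f = 0) ∧
        defSet L r α C = Q) :=
  stmt11_general r hr α hα
end

section
/- Let C be an ideal of R = F[X_1,…,X_s]/⟨X_i^{r_i}−1⟩ over a finite field F with gcd(|F|, n)=1 and generating idempotent e (so C = Re). Then dim_F(C) = |{m ∈ ∏ Z_{r_i} : e(α^m) ≠ 0}|, the cardinality of the support of the DFT of e. -/
open MvPolynomial

/-!
Evaluation at the points `α^m` is an `F`-algebra map `Φ : R → L^M`, where `M = ∏ ZMod r_i` and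
`R = F[X]/⟨X_i^{r_i} - 1⟩`. By Artin's linear independence of the characters `x ↦ Φ(x)_m`,
its image spans `L^M` over `L`, while `R` is spanned over `F` by the `|M|` monomials
`∏ X_i^{m_i}`. For an idempotent `e`, `Φ e` is the indicator of its support `S` and the `L`-span
of `Φ(Re)` is `(Φ e) • L^M`, of dimension `|S|`; hence `|S| ≤ dim_F Re`, and likewise
`|M| - |S| ≤ dim_F R(1-e)`. As `dim_F Re + dim_F R(1-e) = dim_F R ≤ |M|`, both inequalities
are equalities.
-/

open Module Submodule Set

section Idempotent

variable {F R : Type*} [Field F] [CommRing R] [Algebra F R]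

theorem finrank_span_add_finrank_span_one_sub [Module.Finite F R] {e : R}
    (he : IsIdempotentElem e) :
    finrank F ((Ideal.span {e}).restrictScalars F) +
      finrank F ((Ideal.span {1 - e}).restrictScalars F) = finrank F R := by
  have hrange : LinearMap.range (LinearMap.mulLeft F e) = (Ideal.span {e}).restrictScalars F := by
    ext x
    simp [Ideal.mem_span_singleton', mul_comm, eq_comm]
  have hker : LinearMap.ker (LinearMap.mulLeft F e) = (Ideal.span {1 - e}).restrictScalars F := by
    ext x
    simp only [LinearMap.mem_ker, LinearMap.mulLeft_apply, restrictScalars_mem,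
      Ideal.mem_span_singleton']
    constructor
    · exact fun h => ⟨x, by rw [mul_sub, mul_one, mul_comm, h, sub_zero]⟩
    · rintro ⟨a, rfl⟩
      rw [mul_left_comm, he.mul_one_sub_self, mul_zero]
  rw [← hrange, ← hker, LinearMap.finrank_range_add_finrank_ker]

end Idempotent

theorem finrank_span_le_finrank_of_isScalarTower {F L V : Type*} [Field F] [Field L]
    [Algebra F L] [AddCommGroup V] [Module F V] [Module L V] [IsScalarTower F L V]
    (W : Submodule F V) [Module.Finite F W] :
    finrank L (span L (W : Set V)) ≤ finrank F W := by
  let b := finBasis F W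
  have : Module.Finite L (span L (range fun i => (b i : V))) :=
    Module.Finite.span_of_finite L (finite_range _)
  have hW : span L (W : Set V) ≤ span L (range fun i => (b i : V)) := by
    refine span_le.2 fun x hx => span_le_restrictScalars F L _ ?_
    have := apply_mem_span_image_of_mem_span W.subtype (b.mem_span ⟨x, hx⟩)
    rwa [← range_comp] at this
  calc finrank L (span L (W : Set V)) ≤ finrank L (span L (range fun i => (b i : V))) :=
        finrank_mono hW
    _ ≤ finrank F W := (finrank_range_le_card _).trans (by simp)

theorem span_range_eq_top_of_linearIndependent_swap {L ι M : Type*} [Field L] [Fintype M]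
    (v : ι → M → L) (hv : LinearIndependent L (Function.swap v)) :
    span L (range v) = ⊤ := by
  classical
  rw [← dualAnnihilator_eq_bot_iff, eq_bot_iff]
  intro φ hφ
  rw [mem_dualAnnihilator] at hφ
  have hc : ∀ m, φ (fun j => if m = j then 1 else 0) = 0 := by
    refine Fintype.linearIndependent_iff.1 hv _ (funext fun i => ?_)
    simpa [LinearMap.pi_apply_eq_sum_univ φ (v i), mul_comm] using hφ _ (subset_span ⟨i, rfl⟩)
  refine (mem_bot L).2 (LinearMap.ext fun w => ?_)
  simp [LinearMap.pi_apply_eq_sum_univ φ w, hc]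

section SpanningAlgHom

variable {F L R M : Type*} [Field F] [Field L] [Algebra F L] [CommRing R] [Algebra F R]
  [Fintype M] [Module.Finite F R] (Φ : R →ₐ[F] M → L)

theorem ncard_support_le_finrank_span (hΦ : span L (range Φ) = ⊤) {e : R}
    (he : IsIdempotentElem e) :
    {m | Φ e m ≠ 0}.ncard ≤ finrank F ((Ideal.span {e}).restrictScalars F) := by
  classical
  set W := (Ideal.span {e}).restrictScalars F
  have hsingle : ∀ m : {m | Φ e m ≠ 0},
      (Pi.single (m : M) 1 : M → L) ∈ span L (Φ '' (W : Set R)) := by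
    rintro ⟨m, hm⟩
    have hem : Φ e m = 1 :=
      (IsIdempotentElem.iff_eq_zero_or_one.1 (congrFun (he.map Φ) m)).resolve_left hm
    have hmul : Φ e * Pi.single m 1 = Pi.single m 1 := by
      ext k
      rcases eq_or_ne k m with rfl | hk
      · simp [hem]
      · simp [hk]
    have := apply_mem_span_image_of_mem_span (LinearMap.mulLeft L (Φ e))
      (hΦ ▸ mem_top : (Pi.single m 1 : M → L) ∈ span L (range Φ))
    rw [LinearMap.mulLeft_apply, hmul] at this
    refine span_mono ?_ this
    rintro _ ⟨_, ⟨x, rfl⟩, rfl⟩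
    exact ⟨e * x, Ideal.mul_mem_right x _ (Ideal.mem_span_singleton_self e), map_mul Φ e x⟩
  let δ : {m | Φ e m ≠ 0} → M → L := fun m => Pi.single (m : M) 1
  have hind : LinearIndependent L δ :=
    (Pi.basisFun L M).linearIndependent.comp _ Subtype.val_injective
  calc {m | Φ e m ≠ 0}.ncard = finrank L (span L (range δ)) := by
        rw [finrank_span_eq_card hind, Set.ncard_eq_toFinset_card', Set.toFinset_card]
    _ ≤ finrank L (span L ((W.map Φ.toLinearMap : Submodule F (M → L)) : Set (M → L))) :=
        finrank_mono (span_le.2 (range_subset_iff.2 hsingle))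
    _ ≤ finrank F (W.map Φ.toLinearMap) := finrank_span_le_finrank_of_isScalarTower _
    _ ≤ finrank F W := finrank_map_le _ _

theorem finrank_span_eq_ncard_support (hrank : finrank F R ≤ Fintype.card M)
    (hΦ : span L (range Φ) = ⊤) {e : R} (he : IsIdempotentElem e) :
    finrank F ((Ideal.span {e}).restrictScalars F) = {m | Φ e m ≠ 0}.ncard := by
  have hcompl : {m | Φ (1 - e) m ≠ 0} = {m | Φ e m ≠ 0}ᶜ := by
    ext m
    rcases IsIdempotentElem.iff_eq_zero_or_one.1 (congrFun (he.map Φ) m) with h | h <;>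
      simp [h]
  have hle := ncard_support_le_finrank_span Φ hΦ he
  have hle' := ncard_support_le_finrank_span Φ hΦ he.one_sub
  rw [hcompl] at hle'
  have := Set.ncard_add_ncard_compl {m | Φ e m ≠ 0}
  have := finrank_span_add_finrank_span_one_sub (F := F) he
  rw [Nat.card_eq_fintype_card] at *
  omega

end SpanningAlgHom

section QuotientRing

variable {F L : Type*} [Field F] [Field L] [Algebra F L] {s : ℕ} {r : Fin s → ℕ}

theorem polyRelIdeal_le_ker_aeval {x : Fin s → L} (hx : ∀ i, x i ^ r i = 1) :
    polyRelIdeal F r ≤ RingHom.ker (aeval x) := by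
  rw [polyRelIdeal, Ideal.span_le]
  rintro _ ⟨i, rfl⟩
  simp [hx i]

variable (F r) in
theorem mk_X_pow_eq_one (i : Fin s) :
    Ideal.Quotient.mk (polyRelIdeal F r) (X i) ^ r i = 1 := by
  rw [← map_pow, ← sub_eq_zero, ← map_one (Ideal.Quotient.mk _), ← map_sub,
    Ideal.Quotient.eq_zero_iff_mem]
  exact Ideal.subset_span ⟨i, rfl⟩

variable (F r) in
theorem span_range_mk_prod_X_pow_eq_top [∀ i, NeZero (r i)] :
    span F (range fun m : (i : Fin s) → ZMod (r i) =>
      Ideal.Quotient.mk (polyRelIdeal F r) (∏ i, X i ^ (m i).val)) = ⊤ := by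
  rw [eq_top_iff]
  rintro x -
  obtain ⟨f, rfl⟩ := Ideal.Quotient.mk_surjective x
  induction f using MvPolynomial.induction_on' with
  | monomial a c =>
    have hmk : Ideal.Quotient.mkₐ F (polyRelIdeal F r) (monomial a c) =
        c • Ideal.Quotient.mk (polyRelIdeal F r) (∏ i, X i ^ ((a i : ZMod (r i))).val) := by
      rw [monomial_eq, ← smul_eq_C_mul, map_smul, Finsupp.prod_fintype _ _ fun _ => pow_zero _,
        map_prod, map_prod]
      simp only [map_pow, Ideal.Quotient.mkₐ_eq_mk, ZMod.val_natCast]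
      congr 1
      exact Finset.prod_congr rfl fun i _ => pow_eq_pow_mod _ (mk_X_pow_eq_one F r i)
    rw [← Ideal.Quotient.mkₐ_eq_mk F, hmk]
    exact smul_mem _ _ (subset_span ⟨_, rfl⟩)
  | add p q hp hq => rw [map_add]; exact add_mem hp hq

noncomputable def dft (α : Fin s → L) (hα : ∀ i, α i ^ r i = 1) :
    (MvPolynomial (Fin s) F ⧸ polyRelIdeal F r) →ₐ[F] ((i : Fin s) → ZMod (r i)) → L :=
  Ideal.Quotient.liftₐ (polyRelIdeal F r) (AlgHom.pi fun m => aeval fun i => α i ^ (m i).val)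
    fun _ hf => funext fun m => RingHom.mem_ker.1 <|
      polyRelIdeal_le_ker_aeval (x := fun i => α i ^ (m i).val)
        (fun i => by rw [← pow_mul, mul_comm, pow_mul, hα, one_pow]) hf

theorem dft_mk (α : Fin s → L) (hα : ∀ i, α i ^ r i = 1) (f : MvPolynomial (Fin s) F)
    (m : (i : Fin s) → ZMod (r i)) :
    dft α hα (Ideal.Quotient.mk _ f) m = aeval (fun i => α i ^ (m i).val) f :=
  rfl

theorem span_range_dft_eq_top [∀ i, NeZero (r i)] {α : Fin s → L}
    (hα : ∀ i, orderOf (α i) = r i) :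
    span L (range (dft (F := F) α fun i => hα i ▸ pow_orderOf_eq_one (α i))) = ⊤ := by
  generalize_proofs hα₁
  let χ : ((i : Fin s) → ZMod (r i)) → (MvPolynomial (Fin s) F ⧸ polyRelIdeal F r) →* L :=
    fun m => ((Pi.evalRingHom _ m).comp (dft α hα₁).toRingHom).toMonoidHom
  have hχ : Function.Injective χ := fun m m' h => funext fun i => by
    have := DFunLike.congr_fun h (Ideal.Quotient.mk _ (X i))
    change dft α hα₁ (Ideal.Quotient.mk _ (X i)) m =
      dft α hα₁ (Ideal.Quotient.mk _ (X i)) m' at this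
    have hfin : IsOfFinOrder (α i) := orderOf_pos_iff.1 ((hα i).symm ▸ NeZero.pos (r i))
    rw [dft_mk, dft_mk, aeval_X, aeval_X, hfin.pow_eq_pow_iff_modEq, hα] at this
    simpa using (ZMod.natCast_eq_natCast_iff _ _ _).2 this
  exact span_range_eq_top_of_linearIndependent_swap _
    ((linearIndependent_monoidHom _ L).comp χ hχ)

end QuotientRing

theorem stmt18_general {F L : Type*} [Field F] [Field L] [Algebra F L]
    {s : ℕ} (r : Fin s → ℕ) (hr : ∀ i, 0 < r i)
    (α : Fin s → L) (hα : ∀ i, orderOf (α i) = r i)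
    (e : MvPolynomial (Fin s) F ⧸ polyRelIdeal F r) (he : e * e = e)
    (C : Ideal (MvPolynomial (Fin s) F ⧸ polyRelIdeal F r))
    (hC : C = Ideal.span {e}) :
    Module.finrank F (C.restrictScalars F) =
      {m : (i : Fin s) → ZMod (r i) |
        ∀ f : MvPolynomial (Fin s) F, Ideal.Quotient.mk (polyRelIdeal F r) f = e →
          aeval (fun i => α i ^ (m i).val) f ≠ 0}.ncard := by
  have : ∀ i, NeZero (r i) := fun i => ⟨(hr i).ne'⟩
  have hα₁ : ∀ i, α i ^ r i = 1 := fun i => hα i ▸ pow_orderOf_eq_one (α i)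
  have hspan := span_range_mk_prod_X_pow_eq_top F r
  have : Module.Finite F (MvPolynomial (Fin s) F ⧸ polyRelIdeal F r) :=
    ⟨hspan ▸ fg_span (finite_range _)⟩
  subst hC
  rw [finrank_span_eq_ncard_support _ (finrank_le_of_span_eq_top hspan)
    (span_range_dft_eq_top hα) he]
  congr 1
  ext m
  refine ⟨fun h f hf => ?_, fun h => ?_⟩
  · rwa [← dft_mk α hα₁, hf]
  · obtain ⟨f, rfl⟩ := Ideal.Quotient.mk_surjective e
    exact h f rfl

set_option synthInstance.maxHeartbeats 1000000 in
/-- If `C = Re` with `e` idempotent, then `dim_F C` equals the cardinality of the support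
of the DFT of `e`, i.e. `|{m : e(α^m) ≠ 0}|`. -/
theorem stmt18 {F L : Type*} [Field F] [Fintype F] [Field L] [Algebra F L]
    {s : ℕ} (r : Fin s → ℕ) (hr : ∀ i, 0 < r i)
    (hcop : Nat.Coprime (Fintype.card F) (∏ i, r i))
    (α : Fin s → L) (hα : ∀ i, orderOf (α i) = r i)
    (e : MvPolynomial (Fin s) F ⧸ polyRelIdeal F r) (he : e * e = e)
    (C : Ideal (MvPolynomial (Fin s) F ⧸ polyRelIdeal F r))
    (hC : C = Ideal.span {e}) :
    Module.finrank F (C.restrictScalars F) =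
      {m : (i : Fin s) → ZMod (r i) |
        ∀ f : MvPolynomial (Fin s) F, Ideal.Quotient.mk (polyRelIdeal F r) f = e →
          aeval (fun i => α i ^ (m i).val) f ≠ 0}.ncard :=
  stmt18_general r hr α hα e he C hC
end
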